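/- arXiv:1604.03161 — 2 statements merged into one kernel-verified Lean document; each statement's English description precedes it below -/
import Mathlib

section
/- Suppose L ⊂ ℝ^d has all pairwise distances distinct and has no infinite descending chains, and let M be the unique stable matching of L. In the colored friendly frogs game on L, the position (x,y) is a P-position if and only if x desires y, i.e., |x − y| ≤ |x − M(x)|. -/
noncomputable section

/-- Points of `ℝ^d` with the Euclidean norm. -/
abbrev Pt (d : ℕ) := EuclideanSpace ℝ (Fin d)

/-- `L` has all pairwise distances distinct: the distance determines the unordered pair. -/
def DistinctDist {d : ℕ} (L : Set (Pt d)) : Prop :=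
  ∀ x ∈ L, ∀ y ∈ L, ∀ z ∈ L, ∀ w ∈ L,
    x ≠ y → z ≠ w → dist x y = dist z w → (x = z ∧ y = w) ∨ (x = w ∧ y = z)

/-- `L` has no infinite descending chains: no sequence of points of `L` whose consecutive
distances are strictly decreasing. -/
def NoDescChain {d : ℕ} (L : Set (Pt d)) : Prop :=
  ¬ ∃ c : ℕ → Pt d, (∀ n, c n ∈ L) ∧ StrictAnti (fun n => dist (c n) (c (n + 1)))

/-- `R` encodes a matching of `L` (as the symmetric relation "matched to"):
a set of unordered pairs of distinct points of `L`, each point in at most one pair. -/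
def IsMatching {d : ℕ} (L : Set (Pt d)) (R : Pt d → Pt d → Prop) : Prop :=
  (∀ x y, R x y → R y x) ∧
  (∀ x y, R x y → x ∈ L ∧ y ∈ L ∧ x ≠ y) ∧
  (∀ x y z, R x y → R x z → y = z)

/-- The matching `R` of `L` is stable: there is no pair of distinct points of `L`, not matched
to each other, each of which is unmatched or strictly farther from its partner than from
the other point. -/
def IsStable {d : ℕ} (L : Set (Pt d)) (R : Pt d → Pt d → Prop) : Prop :=
  ¬ ∃ x ∈ L, ∃ y ∈ L, x ≠ y ∧ ¬ R x y ∧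
    (∀ z, R x z → dist x y < dist x z) ∧ (∀ z, R y z → dist x y < dist y z)

/-- The move relation of colored friendly frogs on `L`.  Positions are ordered pairs
`(x, y)` of distinct points of `L`, where `y` is the frog of the player about to move;
a legal move goes to `(z, x)` for some `z ∈ L \ {x, y}` with `dist z x < dist x y`. -/
def ColMove {d : ℕ} (L : Set (Pt d)) (p q : Pt d × Pt d) : Prop :=
  ∃ x y z, p = (x, y) ∧ q = (z, x) ∧ x ∈ L ∧ y ∈ L ∧ z ∈ L ∧
    x ≠ y ∧ z ≠ x ∧ z ≠ y ∧ dist z x < dist x y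

/-!
Write `M` for the stable matching and say that `x` desires `y` when `|x - y| ≤ |x - M x|`.
Desire satisfies the defining recursion of P-positions: if `x` does not desire `y`, moving
to `(M x, x)` reaches a position where `M x` desires its partner `x`; if `x` desires `y`,
every move `(z, x)` has `z` strictly desired by `x`, so `z` cannot desire `x` back, since
two points desiring each other are matched by stability and distinct distances.
As the game terminates, the recursion has only one solution.
-/

def IsPPositions {α : Type*} (r : α → α → Prop) (S : Set α) (P : α → Prop) : Prop :=
  ∀ p ∈ S, P p ↔ ∀ q, r p q → ¬ P q

theorem IsPPositions.iff {α : Type*} {r : α → α → Prop} {S : Set α} {P Q : α → Prop}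
    (hwf : WellFounded (flip r)) (hS : ∀ p ∈ S, ∀ q, r p q → q ∈ S)
    (hP : IsPPositions r S P) (hQ : IsPPositions r S Q) : ∀ p ∈ S, P p ↔ Q p := by
  intro p
  induction p using hwf.induction with
  | _ p ih =>
    intro hp
    rw [hP p hp, hQ p hp]
    exact forall_congr' fun q => imp_congr_right fun hq => not_congr (ih q hq (hS p hp q hq))

variable {d : ℕ} {L : Set (Pt d)} {R : Pt d → Pt d → Prop}

variable (L) in
def FrogPositions : Set (Pt d × Pt d) :=
  {p | p.1 ∈ L ∧ p.2 ∈ L ∧ p.1 ≠ p.2}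

theorem ColMove.mem_frogPositions {p q : Pt d × Pt d} (h : ColMove L p q) :
    q ∈ FrogPositions L := by
  obtain ⟨x, y, z, -, rfl, hx, -, hz, -, hzx, -⟩ := h
  exact ⟨hz, hx, hzx⟩

theorem ColMove.snd_eq {p q : Pt d × Pt d} (h : ColMove L p q) : q.2 = p.1 := by
  obtain ⟨x, y, z, rfl, rfl, -⟩ := h
  rfl

theorem ColMove.dist_lt {p q : Pt d × Pt d} (h : ColMove L p q) :
    dist q.1 q.2 < dist p.1 p.2 := by
  obtain ⟨x, y, z, rfl, rfl, -, -, -, -, -, -, hlt⟩ := h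
  exact hlt

theorem wellFounded_flip_colMove (hchain : NoDescChain L) : WellFounded (flip (ColMove L)) := by
  refine wellFounded_iff_isEmpty_descending_chain.2 ⟨fun ⟨p, hp⟩ => hchain ?_⟩
  have hlen : ∀ n, dist (p n).2 (p (n + 1)).2 = dist (p n).1 (p n).2 := fun n => by
    rw [(hp n).snd_eq, dist_comm]
  refine ⟨fun n => (p (n + 1)).2, fun n => (hp n).mem_frogPositions.2.1,
    strictAnti_nat_of_succ_lt fun n => ?_⟩
  simp only [hlen]
  exact (hp (n + 1)).dist_lt

variable (R) in
def Desires (x y : Pt d) : Prop :=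
  ∀ z, R x z → dist x y ≤ dist x z

theorem desires_of_rel (hM : IsMatching L R) {x y : Pt d} (h : R x y) : Desires R x y :=
  fun _ hz => (hM.2.2 x y _ h hz) ▸ le_rfl

theorem Desires.dist_lt (hdist : DistinctDist L) (hM : IsMatching L R) {x y : Pt d}
    (hx : x ∈ L) (hy : y ∈ L) (hxy : x ≠ y) (h : Desires R x y) (hR : ¬ R x y) :
    ∀ z, R x z → dist x y < dist x z := by
  intro z hz
  obtain ⟨-, hzL, hxz⟩ := hM.2.1 x z hz
  refine (h z hz).lt_of_ne fun heq => ?_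
  rcases hdist x hx y hy x hx z hzL hxy hxz heq with ⟨-, rfl⟩ | ⟨-, rfl⟩
  · exact hR hz
  · exact hxy rfl

theorem IsStable.rel_of_desires (hdist : DistinctDist L) (hM : IsMatching L R)
    (hS : IsStable L R) {x y : Pt d} (hx : x ∈ L) (hy : y ∈ L) (hxy : x ≠ y)
    (hdxy : Desires R x y) (hdyx : Desires R y x) : R x y := by
  by_contra hR
  have hRyx : ¬ R y x := fun h => hR (hM.1 y x h)
  refine hS ⟨x, hx, y, hy, hxy, hR, hdxy.dist_lt hdist hM hx hy hxy hR, fun z hz => ?_⟩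
  rw [dist_comm]
  exact hdyx.dist_lt hdist hM hy hx hxy.symm hRyx z hz

theorem isPPositions_desires (hdist : DistinctDist L) (hM : IsMatching L R)
    (hS : IsStable L R) :
    IsPPositions (ColMove L) (FrogPositions L) (fun p => Desires R p.1 p.2) := by
  rintro ⟨x, y⟩ ⟨hx, hy, hxy⟩
  constructor
  · rintro hdes q ⟨x', y', z, hp, rfl, -, -, hz, -, hzx, -, hlt⟩ hzdes
    obtain ⟨rfl, rfl⟩ := Prod.mk.inj hp
    have hxz : dist x z < dist x y := by rwa [dist_comm]
    have hR := hS.rel_of_desires hdist hM hx hz hzx.symm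
      (fun w hw => hxz.le.trans (hdes w hw)) hzdes
    exact (hxz.trans_le (hdes z hR)).false
  · intro hwin w hw
    by_contra! hlt
    obtain ⟨-, hwL, hxw⟩ := hM.2.1 x w hw
    have hwy : w ≠ y := by rintro rfl; exact lt_irrefl _ hlt
    refine hwin (w, x) ⟨x, y, w, rfl, rfl, hx, hy, hwL, hxy, hxw.symm, hwy, ?_⟩
      (desires_of_rel hM (hM.1 x w hw))
    rwa [dist_comm]

/-- let `L` have distinct distances and no infinite descending chains, let `R`
be its (unique) stable matching, and let `P` be the P-position predicate of colored
friendly frogs on `L` (any predicate satisfying the defining fixpoint equation, which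
determines it uniquely by well-foundedness).  Then `(x, y)` is a P-position if and only if
`x` desires `y`, i.e. `dist x y ≤ dist x (M x)` (with the right side `∞` if `x` is
unmatched). -/
theorem colored_ff_ppositions_iff_desire {d : ℕ} (L : Set (Pt d))
    (hdist : DistinctDist L) (hchain : NoDescChain L)
    (R : Pt d → Pt d → Prop) (hM : IsMatching L R) (hS : IsStable L R)
    (P : Pt d × Pt d → Prop)
    (hP : ∀ x ∈ L, ∀ y ∈ L, x ≠ y →
      (P (x, y) ↔ ∀ q, ColMove L (x, y) q → ¬ P q)) :
    ∀ x ∈ L, ∀ y ∈ L, x ≠ y →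
      (P (x, y) ↔ ∀ z, R x z → dist x y ≤ dist x z) := by
  have hP' : IsPPositions (ColMove L) (FrogPositions L) P :=
    fun p ⟨hx, hy, hxy⟩ => hP p.1 hx p.2 hy hxy
  intro x hx y hy hxy
  exact IsPPositions.iff (wellFounded_flip_colMove hchain)
    (fun _ _ _ hq => hq.mem_frogPositions) hP' (isPPositions_desires hdist hM hS)
    (x, y) ⟨hx, hy, hxy⟩
end
end

section
/- Let L_A and L_B be disjoint subsets of ℝ^d whose union L = L_A ∪ L_B has distinct distances and no infinite descending chains. Then there exists a unique stable two-color matching of (L_A, L_B); moreover all points left unmatched by it belong to the same one of the two sets (either every unmatched point is in L_A, or every unmatched point is in L_B). -/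
noncomputable section

/-- `R` encodes a two-color matching of the disjoint sets `(A, B)`: `R x y` means the
amber point `x ∈ A` is matched to the blue point `y ∈ B`, and each point lies in at most
one pair. -/
def IsTCMatching {d : ℕ} (A B : Set (Pt d)) (R : Pt d → Pt d → Prop) : Prop :=
  (∀ x y, R x y → x ∈ A ∧ y ∈ B) ∧
  (∀ x y y', R x y → R x y' → y = y') ∧
  (∀ x x' y, R x y → R x' y → x = x')

/-- The two-color matching `R` of `(A, B)` is stable: there are no `x ∈ A` and `y ∈ B`, not
matched to each other, each of which is unmatched or strictly farther from its partner
than from the other point. -/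
def IsTCStable {d : ℕ} (A B : Set (Pt d)) (R : Pt d → Pt d → Prop) : Prop :=
  ¬ ∃ x ∈ A, ∃ y ∈ B, ¬ R x y ∧
    (∀ z, R x z → dist x y < dist x z) ∧ (∀ z, R z y → dist x y < dist z y)

/-!
Declare a pair matched iff no strictly shorter pair sharing an endpoint with it is matched. As the
distances are distinct, the stable matchings are exactly the solutions of this recursion, and two
unmatched points of opposite colours would block any stable matching. The recursion has a unique
solution once "strictly shorter and sharing an endpoint" is well-founded. A counterexample to that
yields a non-accessible pair `(u, v)`, shortest among such pairs through `u` and minimal for the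
chain step `(u, v) → (v, w)`. Its non-accessible shorter neighbour cannot pass through `u`, so it
passes through `v`, and the shortest non-accessible pair through `v` is a smaller chain step.
Shortest pairs through a point exist because, by compactness, a closed ball meets a set without
descending chains in finitely many points.
-/

open Metric Set

section PseudoMetric

variable {X : Type*} [PseudoMetricSpace X]

theorem dist_lt_dist_of_three_mul_dist_lt {x y z q : X} (hxy : 3 * dist y q < dist x q)
    (hyz : 3 * dist z q < dist y q) : dist y z < dist x y := by
  have hyz' := dist_triangle_right y z q
  have hxy' := dist_triangle x y q
  linarith [dist_nonneg (x := y) (y := q)]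

def ShorterAdj (L : Set X) (q p : X × X) : Prop :=
  q.1 ∈ L ∧ q.2 ∈ L ∧ (q.1 = p.1 ∨ q.1 = p.2 ∨ q.2 = p.1 ∨ q.2 = p.2) ∧
    dist q.1 q.2 < dist p.1 p.2

def ChainStep (L : Set X) (t s : X × X) : Prop :=
  t.1 = s.2 ∧ t.1 ∈ L ∧ t.2 ∈ L ∧ dist t.1 t.2 < dist s.1 s.2

variable {L : Set X} {p q : X × X}

theorem shorterAdj_swap_right : ShorterAdj L q p.swap ↔ ShorterAdj L q p := by
  simp only [ShorterAdj, Prod.fst_swap, Prod.snd_swap, dist_comm p.2]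
  tauto

theorem Acc.shorterAdj_swap (h : Acc (ShorterAdj L) p) : Acc (ShorterAdj L) p.swap :=
  ⟨_, fun _ hq => h.inv (shorterAdj_swap_right.1 hq)⟩

theorem ShorterAdj.exists_endpoint (h : ShorterAdj L q p) :
    ∃ u w, (u = p.1 ∨ u = p.2) ∧ (q = (u, w) ∨ q = (w, u)) ∧ w ∈ L ∧
      dist u w < dist p.1 p.2 := by
  obtain ⟨hq1, hq2, hshare, hlt⟩ := h
  rcases hshare with h | h | h | h
  · exact ⟨q.1, q.2, .inl h, .inl rfl, hq2, hlt⟩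
  · exact ⟨q.1, q.2, .inr h, .inl rfl, hq2, hlt⟩
  · exact ⟨q.2, q.1, .inl h, .inr rfl, hq1, (dist_comm _ _).trans_lt hlt⟩
  · exact ⟨q.2, q.1, .inr h, .inr rfl, hq1, (dist_comm _ _).trans_lt hlt⟩

theorem ShorterAdj.fst_eq_or_snd_eq {A B : Set X} (hdisj : Disjoint A B) (h : ShorterAdj L q p)
    (hq1 : q.1 ∈ A) (hq2 : q.2 ∈ B) (hp1 : p.1 ∈ A) (hp2 : p.2 ∈ B) :
    q.1 = p.1 ∨ q.2 = p.2 := by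
  rcases h.2.2.1 with h | h | h | h
  · exact .inl h
  · exact absurd h (hdisj.ne_of_mem hq1 hp2)
  · exact absurd h (hdisj.ne_of_mem hp1 hq2).symm
  · exact .inr h

end PseudoMetric

section Euclidean

variable {d : ℕ} {L : Set (Pt d)}

theorem NoDescChain.wellFounded_chainStep (hL : NoDescChain L) : WellFounded (ChainStep L) := by
  refine wellFounded_iff_isEmpty_descending_chain.2 ⟨fun ⟨f, hf⟩ => hL ?_⟩
  refine ⟨fun n => (f (n + 1)).1, fun n => (hf n).2.1, strictAnti_nat_of_succ_lt fun n => ?_⟩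
  have hdist := (hf (n + 1)).2.2.2
  rwa [← (hf (n + 1 + 1)).1, ← (hf (n + 1)).1] at hdist

theorem NoDescChain.finite_inter_closedBall (hL : NoDescChain L) (p : Pt d) (r : ℝ) :
    (L ∩ closedBall p r).Finite := by
  by_contra hinf
  obtain ⟨q, -, hq⟩ := Set.Infinite.exists_accPt_of_subset_isCompact hinf
    (isCompact_closedBall p r) inter_subset_right
  have closer : ∀ ε > 0, ∃ y ∈ L, y ≠ q ∧ dist y q < ε := fun ε hε => by
    obtain ⟨y, ⟨hy, hyL, -⟩, hyq⟩ := accPt_iff_nhds.1 hq _ (ball_mem_nhds q hε)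
    exact ⟨y, hyL, hyq, hy⟩
  have third_pos : ∀ {x}, x ≠ q → 0 < dist x q / 3 := fun h => by
    have := dist_pos.2 h
    positivity
  -- points of `L` approaching `q` geometrically fast would form a descending chain
  obtain ⟨x, -, hxq, -⟩ := closer 1 one_pos
  obtain ⟨y, hy, hyq, hxy⟩ := closer _ (third_pos hxq)
  obtain ⟨s, ⟨hs, hsq, hs3⟩, hmin⟩ := hL.wellFounded_chainStep.has_min
    {s | s.2 ∈ L ∧ s.2 ≠ q ∧ 3 * dist s.2 q < dist s.1 q} ⟨(x, y), hy, hyq, by linarith⟩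
  obtain ⟨z, hz, hzq, hsz⟩ := closer _ (third_pos hsq)
  exact hmin (s.2, z) ⟨hz, hzq, by linarith⟩
    ⟨rfl, hs, hz, dist_lt_dist_of_three_mul_dist_lt hs3 (by linarith)⟩

theorem NoDescChain.exists_nearest (hL : NoDescChain L) {S : Set (Pt d)} (hS : S ⊆ L)
    (x : Pt d) (hne : S.Nonempty) : ∃ y ∈ S, ∀ z ∈ S, dist x y ≤ dist x z := by
  obtain ⟨y₀, hy₀⟩ := hne
  have hfin : (S ∩ closedBall x (dist x y₀)).Finite :=
    (hL.finite_inter_closedBall x _).subset (inter_subset_inter_left _ hS)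
  obtain ⟨y, ⟨hy, -⟩, hmin⟩ := Set.exists_min_image _ (dist x) hfin
    ⟨y₀, hy₀, mem_closedBall'.2 le_rfl⟩
  refine ⟨y, hy, fun z hz => ?_⟩
  by_cases hzx : dist x z ≤ dist x y₀
  · exact hmin z ⟨hz, mem_closedBall'.2 hzx⟩
  · linarith [hmin y₀ ⟨hy₀, mem_closedBall'.2 le_rfl⟩]

theorem NoDescChain.wellFounded_shorterAdj (hL : NoDescChain L) :
    WellFounded (ShorterAdj L) := by
  set Bad : Pt d × Pt d → Prop := fun s => ¬ Acc (ShorterAdj L) s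
  have bad_step : ∀ s, Bad s → ∃ u w, (u = s.1 ∨ u = s.2) ∧ w ∈ L ∧ Bad (u, w) ∧
      dist u w < dist s.1 s.2 := by
    intro s hs
    obtain ⟨t, ht, hts⟩ := exists_not_acc_lt_of_not_acc hs
    obtain ⟨u, w, hu, rfl | rfl, hw, hlt⟩ := hts.exists_endpoint
    · exact ⟨u, w, hu, hw, ht, hlt⟩
    · exact ⟨u, w, hu, hw, fun h => ht h.shorterAdj_swap, hlt⟩
  have shortest_bad : ∀ u w, w ∈ L → Bad (u, w) → ∃ v ∈ L, Bad (u, v) ∧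
      dist u v ≤ dist u w ∧ ∀ v' ∈ L, Bad (u, v') → dist u v ≤ dist u v' := by
    intro u w hw hbad
    obtain ⟨v, ⟨hv, hvbad⟩, hmin⟩ :=
      hL.exists_nearest (S := {v | v ∈ L ∧ Bad (u, v)}) (fun _ h => h.1) u ⟨w, hw, hbad⟩
    exact ⟨v, hv, hvbad, hmin w ⟨hw, hbad⟩, fun v' hv' hb => hmin v' ⟨hv', hb⟩⟩
  refine ⟨fun p => by_contra fun hp => ?_⟩
  obtain ⟨u, w, -, hw, hbad, -⟩ := bad_step p hp
  obtain ⟨v, hv, hvbad, -, hvmin⟩ := shortest_bad u w hw hbad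
  obtain ⟨s, ⟨hs, hsbad, hs_shortest⟩, hs_minimal⟩ := hL.wellFounded_chainStep.has_min
    {s | s.2 ∈ L ∧ Bad s ∧ ∀ v ∈ L, Bad (s.1, v) → dist s.1 s.2 ≤ dist s.1 v}
    ⟨(u, v), hv, hvbad, hvmin⟩
  obtain ⟨u, w, rfl | rfl, hw, hbad, hlt⟩ := bad_step s hsbad
  · exact (hs_shortest w hw hbad).not_gt hlt
  · obtain ⟨v, hv, hvbad, hvw, hvmin⟩ := shortest_bad s.2 w hw hbad
    exact hs_minimal (s.2, v) ⟨hv, hvbad, hvmin⟩ ⟨rfl, hs, hv, hvw.trans_lt hlt⟩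

end Euclidean

/-- `M` is the unique kernel (independent, absorbing set) of the digraph `r` restricted to `P`. -/
theorem WellFounded.existsUnique_kernel {α : Type*} {r : α → α → Prop} (hr : WellFounded r)
    (P : α → Prop) : ∃! M : α → Prop, ∀ a, M a ↔ P a ∧ ∀ b, r b a → ¬ M b := by
  refine ⟨hr.fix fun a IH => P a ∧ ∀ b (h : r b a), ¬ IH b h, fun a => by rw [hr.fix_eq],
    fun M hM => funext fun a => propext ?_⟩
  induction a using hr.induction with
  | _ a IH =>
    rw [hM, hr.fix_eq]
    exact and_congr_right fun _ => forall₂_congr fun b hb => not_congr (IH b hb)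

section Matching

variable {d : ℕ} {A B : Set (Pt d)} {R : Pt d → Pt d → Prop}

def IsGreedyMatching (A B : Set (Pt d)) (R : Pt d → Pt d → Prop) : Prop :=
  ∀ x y, R x y ↔ x ∈ A ∧ y ∈ B ∧ ∀ q, ShorterAdj (A ∪ B) q (x, y) → ¬ R q.1 q.2

theorem existsUnique_isGreedyMatching (hwf : WellFounded (ShorterAdj (A ∪ B))) :
    ∃! R, IsGreedyMatching A B R := by
  obtain ⟨M, hM, huniq⟩ := hwf.existsUnique_kernel fun p => p.1 ∈ A ∧ p.2 ∈ B
  refine ⟨Function.curry M, fun x y => (hM (x, y)).trans and_assoc, fun R hR => ?_⟩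
  rw [← huniq (Function.uncurry R) fun p => (hR p.1 p.2).trans and_assoc.symm]
  rfl

theorem DistinctDist.right_eq_of_dist_eq (hdist : DistinctDist (A ∪ B)) (hdisj : Disjoint A B)
    {x y y' : Pt d} (hx : x ∈ A) (hy : y ∈ B) (hy' : y' ∈ B) (h : dist x y = dist x y') :
    y = y' := by
  rcases hdist x (.inl hx) y (.inr hy) x (.inl hx) y' (.inr hy') (hdisj.ne_of_mem hx hy)
    (hdisj.ne_of_mem hx hy') h with ⟨-, h⟩ | ⟨h, -⟩
  · exact h
  · exact absurd h (hdisj.ne_of_mem hx hy')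

theorem DistinctDist.left_eq_of_dist_eq (hdist : DistinctDist (A ∪ B)) (hdisj : Disjoint A B)
    {x x' y : Pt d} (hx : x ∈ A) (hx' : x' ∈ A) (hy : y ∈ B) (h : dist x y = dist x' y) :
    x = x' := by
  rw [dist_comm x, dist_comm x'] at h
  rcases hdist y (.inr hy) x (.inl hx) y (.inr hy) x' (.inl hx') (hdisj.ne_of_mem hx hy).symm
    (hdisj.ne_of_mem hx' hy).symm h with ⟨-, h⟩ | ⟨h, -⟩
  · exact h
  · exact absurd h.symm (hdisj.ne_of_mem hx' hy)

theorem IsGreedyMatching.isTCMatching (hdisj : Disjoint A B) (hdist : DistinctDist (A ∪ B))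
    (hR : IsGreedyMatching A B R) : IsTCMatching A B R := by
  have mem : ∀ {x y}, R x y → x ∈ A ∧ y ∈ B := fun h => ⟨((hR _ _).1 h).1, ((hR _ _).1 h).2.1⟩
  have not_shorter : ∀ {x y x' y'}, R x y → R x' y' → ¬ ShorterAdj (A ∪ B) (x', y') (x, y) :=
    fun hp hq h => ((hR _ _).1 hp).2.2 _ h hq
  refine ⟨fun x y => mem, fun x y y' hy hy' => by_contra fun hne => ?_,
    fun x x' y hx hx' => by_contra fun hne => ?_⟩
  · obtain ⟨hxA, hyB⟩ := mem hy
    have hy'B := (mem hy').2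
    rcases Ne.lt_or_gt (mt (hdist.right_eq_of_dist_eq hdisj hxA hyB hy'B) hne) with h | h
    · exact not_shorter hy' hy ⟨.inl hxA, .inr hyB, .inl rfl, h⟩
    · exact not_shorter hy hy' ⟨.inl hxA, .inr hy'B, .inl rfl, h⟩
  · obtain ⟨hxA, hyB⟩ := mem hx
    have hx'A := (mem hx').1
    rcases Ne.lt_or_gt (mt (hdist.left_eq_of_dist_eq hdisj hxA hx'A hyB) hne) with h | h
    · exact not_shorter hx' hx ⟨.inl hxA, .inr hyB, .inr (.inr (.inr rfl)), h⟩
    · exact not_shorter hx hx' ⟨.inl hx'A, .inr hyB, .inr (.inr (.inr rfl)), h⟩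

theorem IsGreedyMatching.isTCStable (hdisj : Disjoint A B) (hR : IsGreedyMatching A B R) :
    IsTCStable A B R := by
  rintro ⟨x, hx, y, hy, hnxy, hxz, hyz⟩
  refine hnxy ((hR x y).2 ⟨hx, hy, fun q hq hRq => ?_⟩)
  obtain ⟨hq1, hq2, -⟩ := (hR _ _).1 hRq
  rcases hq.fst_eq_or_snd_eq hdisj hq1 hq2 hx hy with h | h <;> dsimp only at h
  · exact (hxz q.2 (h ▸ hRq)).not_gt (h ▸ hq.2.2.2)
  · exact (hyz q.1 (h ▸ hRq)).not_gt (h ▸ hq.2.2.2)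

theorem IsTCStable.isGreedyMatching (hdisj : Disjoint A B) (hdist : DistinctDist (A ∪ B))
    (hM : IsTCMatching A B R) (hS : IsTCStable A B R) : IsGreedyMatching A B R := by
  refine fun x y => ⟨fun hxy => ?_, fun ⟨hx, hy, hshort⟩ => by_contra fun hnxy => hS ?_⟩
  · obtain ⟨hx, hy⟩ := hM.1 x y hxy
    refine ⟨hx, hy, fun q hq hRq => ?_⟩
    obtain ⟨hq1, hq2⟩ := hM.1 _ _ hRq
    have hne : q ≠ (x, y) := fun h => (h ▸ hq.2.2.2).false
    rcases hq.fst_eq_or_snd_eq hdisj hq1 hq2 hx hy with h | h <;> dsimp only at h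
    · exact hne (Prod.ext h (hM.2.1 x _ _ (h ▸ hRq) hxy))
    · exact hne (Prod.ext (hM.2.2 _ _ y (h ▸ hRq) hxy) h)
  -- `(x, y)` blocks `R`: a partner at most as close would be shorter, or equal by distinctness
  -- `(x, y)` blocks `R`: a partner of `x` or `y` at least as close would be a shorter matched
  -- pair or, by distinct distances, `(x, y)` itself
  refine ⟨x, hx, y, hy, hnxy, fun z hz => ?_, fun z hz => ?_⟩
  · have hzB := (hM.1 x z hz).2
    refine (not_lt.1 fun h => hshort (x, z) ⟨.inl hx, .inr hzB, .inl rfl, h⟩ hz).lt_of_ne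
      fun h => hnxy ?_
    rwa [hdist.right_eq_of_dist_eq hdisj hx hy hzB h]
  · have hzA := (hM.1 z y hz).1
    refine (not_lt.1 fun h =>
      hshort (z, y) ⟨.inl hzA, .inr hy, .inr (.inr (.inr rfl)), h⟩ hz).lt_of_ne fun h => hnxy ?_
    rwa [hdist.left_eq_of_dist_eq hdisj hx hzA hy h]

theorem isTCMatching_and_isTCStable_iff (hdisj : Disjoint A B) (hdist : DistinctDist (A ∪ B)) :
    IsTCMatching A B R ∧ IsTCStable A B R ↔ IsGreedyMatching A B R :=
  ⟨fun ⟨hM, hS⟩ => hS.isGreedyMatching hdisj hdist hM,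
    fun hR => ⟨hR.isTCMatching hdisj hdist, hR.isTCStable hdisj⟩⟩

end Matching

/-- if `A` and `B` are disjoint and `A ∪ B` has distinct distances and no
infinite descending chains, then there is a unique stable two-color matching of `(A, B)`,
and its unmatched points all lie in the same one of the two sets. -/
theorem exists_unique_stable_two_color_matching {d : ℕ} (A B : Set (Pt d))
    (hdisj : Disjoint A B) (hdist : DistinctDist (A ∪ B)) (hchain : NoDescChain (A ∪ B)) :
    (∃! R : Pt d → Pt d → Prop, IsTCMatching A B R ∧ IsTCStable A B R) ∧
    ∀ R : Pt d → Pt d → Prop, IsTCMatching A B R → IsTCStable A B R →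
      ¬ ((∃ x ∈ A, ∀ y, ¬ R x y) ∧ (∃ y ∈ B, ∀ x, ¬ R x y)) := by
  refine ⟨(existsUnique_congr fun R => isTCMatching_and_isTCStable_iff hdisj hdist).2
    (existsUnique_isGreedyMatching hchain.wellFounded_shorterAdj), ?_⟩
  rintro R - hR ⟨⟨x, hx, hxu⟩, y, hy, hyu⟩
  exact hR ⟨x, hx, y, hy, hxu y, fun z hz => (hxu z hz).elim, fun z hz => (hyu z hz).elim⟩
end
end
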